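/- arXiv:2507.06099 — 7 statements merged into one kernel-verified Lean document; each statement's English description precedes it below -/
import Mathlib

section
/- Every positive integer n is a sharing number: there exists a positive integer m (a multiple of n) such that for every positive integer k, every partition of k·m into parts that are divisors of n can be written as a disjoint union of k partitions, each summing to m. -/
/-!
Take `m = τ(n) · n`. By pigeonhole, a multiset of divisors of `n` with sum at least `τ(n) · n`
contains `n / d` copies of some divisor `d`, i.e. a sub-multiset summing to `n`; extracting
such blocks `τ(n)` times yields a sub-multiset summing to `m` whenever the total is at least `2m`.
Splitting off parts of sum `m` greedily then partitions any total `k · m`.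
-/

/-- `m` exhibits sharing for `n` if for every positive integer `k`, every multiset of
divisors of `n` summing to `k * m` can be partitioned into `k` sub-multisets each
summing to `m`. -/
def ExhibitsSharing (n m : ℕ) : Prop :=
  ∀ k : ℕ, 0 < k → ∀ s : Multiset ℕ, (∀ d ∈ s, d ∣ n) → s.sum = k * m →
    ∃ P : Multiset (Multiset ℕ),
      Multiset.card P = k ∧ P.join = s ∧ ∀ t ∈ P, Multiset.sum t = m

namespace Multiset

variable {p : ℕ → Prop}

lemma sum_tsub_add_sum_of_le {s t : Multiset ℕ} (h : t ≤ s) : (s - t).sum + t.sum = s.sum := by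
  rw [← sum_add, tsub_add_cancel_of_le h]

lemma forall_mem_tsub_of_forall_mem {s : Multiset ℕ} (t : Multiset ℕ) (hs : ∀ d ∈ s, p d) :
    ∀ d ∈ s - t, p d :=
  fun d hd => hs d (mem_of_le tsub_le_self hd)

lemma exists_le_sum_eq_mul_of_exists_le_sum_eq {n c : ℕ}
    (extract : ∀ s : Multiset ℕ, (∀ d ∈ s, p d) → c ≤ s.sum → ∃ t ≤ s, t.sum = n) (j : ℕ)
    (s : Multiset ℕ) (hs : ∀ d ∈ s, p d) (hsum : j * n + c ≤ s.sum) :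
    ∃ t ≤ s, t.sum = j * n := by
  induction j generalizing s with
  | zero => exact ⟨0, zero_le s, by simp⟩
  | succ j ih =>
    obtain ⟨t₀, ht₀s, ht₀⟩ := extract s hs (le_of_add_le_right hsum)
    have hrest := sum_tsub_add_sum_of_le ht₀s
    obtain ⟨t₁, ht₁, ht₁sum⟩ :=
      ih (s - t₀) (forall_mem_tsub_of_forall_mem t₀ hs) (by rw [add_mul] at hsum; omega)
    refine ⟨t₁ + t₀, ?_, by rw [sum_add, ht₁sum, ht₀, add_mul, one_mul]⟩
    simpa only [tsub_add_cancel_of_le ht₀s] using add_le_add ht₁ (le_refl t₀)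

lemma exists_join_eq_of_exists_le_sum_eq {m : ℕ}
    (extract : ∀ s : Multiset ℕ, (∀ d ∈ s, p d) → 2 * m ≤ s.sum → ∃ t ≤ s, t.sum = m)
    (k : ℕ) (hk : 0 < k) (s : Multiset ℕ) (hs : ∀ d ∈ s, p d) (hsum : s.sum = k * m) :
    ∃ P : Multiset (Multiset ℕ), card P = k ∧ P.join = s ∧ ∀ t ∈ P, t.sum = m := by
  induction k, hk using Nat.le_induction generalizing s with
  | base => exact ⟨{s}, rfl, by simp, by simpa using hsum⟩
  | succ k hk ih =>
    obtain ⟨t, hts, ht⟩ := extract s hs (by rw [hsum]; exact Nat.mul_le_mul_right m (by omega))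
    have hrest := sum_tsub_add_sum_of_le hts
    obtain ⟨P, hPcard, hPjoin, hP⟩ :=
      ih (s - t) (forall_mem_tsub_of_forall_mem t hs) (by rw [add_one_mul] at hsum; omega)
    refine ⟨t ::ₘ P, by rw [card_cons, hPcard], ?_, ?_⟩
    · rw [join_cons, hPjoin, add_tsub_cancel_of_le hts]
    · simpa only [mem_cons, forall_eq_or_imp] using ⟨ht, hP⟩

end Multiset

open Multiset

lemma exists_le_sum_eq_of_card_divisors_mul_le_sum {n : ℕ} (hn : n ≠ 0) (s : Multiset ℕ)
    (hs : ∀ d ∈ s, d ∣ n) (hsum : n.divisors.card * n ≤ s.sum) : ∃ t ≤ s, t.sum = n := by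
  by_contra! hnone
  have hcount : ∀ a ∈ s.toFinset, s.count a • a < n := by
    intro a ha
    have hd := hs a (mem_toFinset.mp ha)
    have hlt : s.count a < n / a := by
      by_contra! hge
      refine hnone _ (le_count_iff_replicate_le.mp hge) ?_
      rw [sum_replicate, smul_eq_mul, Nat.div_mul_cancel hd]
    have := Nat.mul_lt_mul_of_pos_right hlt (Nat.pos_of_dvd_of_pos hd (Nat.pos_of_ne_zero hn))
    rwa [Nat.div_mul_cancel hd] at this
  have hne : s.toFinset.Nonempty := by
    refine Finset.nonempty_iff_ne_empty.mpr fun h => ?_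
    rw [toFinset_eq_empty.mp h, sum_zero, nonpos_iff_eq_zero, mul_eq_zero] at hsum
    exact hsum.elim (Finset.card_ne_zero.mpr ⟨n, Nat.mem_divisors_self n hn⟩) hn
  have hsub : s.toFinset ⊆ n.divisors :=
    fun a ha => Nat.mem_divisors.mpr ⟨hs a (mem_toFinset.mp ha), hn⟩
  have : s.sum < n.divisors.card * n :=
    calc s.sum = ∑ a ∈ s.toFinset, s.count a • a := Finset.sum_multiset_count s
      _ < ∑ _a ∈ s.toFinset, n := Finset.sum_lt_sum_of_nonempty hne hcount
      _ = s.toFinset.card * n := by rw [Finset.sum_const, smul_eq_mul]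
      _ ≤ n.divisors.card * n := Nat.mul_le_mul_right n (Finset.card_le_card hsub)
  omega

lemma exhibitsSharing_card_divisors_mul {n : ℕ} (hn : n ≠ 0) :
    ExhibitsSharing n (n.divisors.card * n) := by
  refine exists_join_eq_of_exists_le_sum_eq fun s hs hsum => ?_
  refine exists_le_sum_eq_mul_of_exists_le_sum_eq
    (exists_le_sum_eq_of_card_divisors_mul_le_sum hn) _ s hs ?_
  omega

/-- Every positive integer is a sharing number: some positive multiple `m` of `n`
exhibits sharing for `n`. -/
theorem every_positive_integer_is_sharing_number (n : ℕ) (hn : 0 < n) :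
    ∃ m : ℕ, 0 < m ∧ n ∣ m ∧ ExhibitsSharing n m := by
  have hτ : 0 < n.divisors.card := Finset.card_pos.mpr ⟨n, Nat.mem_divisors_self n hn.ne'⟩
  exact ⟨n.divisors.card * n, Nat.mul_pos hτ hn, dvd_mul_left n _,
    exhibitsSharing_card_divisors_mul hn.ne'⟩
end

section
/- For any prime p and natural number n, the integer p^n exhibits sharing for itself: every multiset of divisors of p^n summing to k·p^n can be split into k sub-multisets each summing to p^n. -/
lemma exists_extract (p : ℕ) (hp : p.Prime) :
    ∀ s : Multiset ℕ, ∀ T : ℕ, 0 < T → (∀ d ∈ s, ∃ i, d = p ^ i) →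
      (∀ d ∈ s, d ∣ T) → T ≤ s.sum → ∃ t, t ≤ s ∧ t.sum = T := by
  intro s
  induction s using Multiset.strongInductionOn with
  | ih s IH =>
    intro T hT hpow hdvd hle
    have hs : s ≠ 0 := by
      rintro rfl; simp at hle; omega
    obtain ⟨a, ha, hmax⟩ : ∃ a ∈ s, ∀ b ∈ s, b ≤ a := by
      have hne : s.toFinset.Nonempty := by
        simp [Multiset.toFinset_nonempty, hs]
      exact ⟨s.toFinset.max' hne, Multiset.mem_toFinset.1 (s.toFinset.max'_mem hne),
        fun b hb => s.toFinset.le_max' b (Multiset.mem_toFinset.2 hb)⟩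
    have haT : a ∣ T := hdvd a ha
    rcases eq_or_lt_of_le (Nat.le_of_dvd hT haT) with heq | hlt
    · exact ⟨{a}, by simpa using Multiset.singleton_le.2 ha, by simp [heq]⟩
    · have hTa : 0 < T - a := by omega
      have herase : s.erase a < s := Multiset.erase_lt.2 ha
      have hcons : a ::ₘ s.erase a = s := Multiset.cons_erase ha
      have hsum : T - a ≤ (s.erase a).sum := by
        have : s.sum = a + (s.erase a).sum := by
          conv_lhs => rw [← hcons]
          simp
        omega
      have hdvd' : ∀ d ∈ s.erase a, d ∣ T - a := by
        intro d hd
        have hds : d ∈ s := Multiset.mem_of_mem_erase hd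
        have hda : d ∣ a := by
          obtain ⟨i, rfl⟩ := hpow d hds
          obtain ⟨j, rfl⟩ := hpow a ha
          exact pow_dvd_pow p ((Nat.pow_le_pow_iff_right hp.one_lt).1 (hmax _ hds))
        exact Nat.dvd_sub (hdvd d hds) hda
      obtain ⟨t, ht, hts⟩ := IH (s.erase a) herase (T - a) hTa
        (fun d hd => hpow d (Multiset.mem_of_mem_erase hd)) hdvd' hsum
      refine ⟨a ::ₘ t, ?_, ?_⟩
      · calc a ::ₘ t ≤ a ::ₘ s.erase a := Multiset.cons_le_cons a ht
          _ = s := hcons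
      · simp [hts]; omega

/-- For a prime `p`, the number `p ^ n` exhibits sharing for itself. -/
theorem prime_pow_exhibits_sharing_for_itself (p : ℕ) (hp : p.Prime) (n : ℕ) :
    ExhibitsSharing (p ^ n) (p ^ n) := by
  intro k hk s hdvd hsum
  induction k generalizing s with
  | zero => omega
  | succ k IH =>
    rcases Nat.eq_zero_or_pos k with rfl | hk'
    · exact ⟨{s}, by simp, by simp, by simpa using hsum⟩
    · have hppos : 0 < p ^ n := pow_pos hp.pos n
      obtain ⟨t, hts, htsum⟩ := exists_extract p hp s (p ^ n) hppos
        (fun d hd => by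
          obtain ⟨i, _, rfl⟩ := (Nat.dvd_prime_pow hp).1 (hdvd d hd)
          exact ⟨i, rfl⟩)
        hdvd
        (by rw [hsum]; exact Nat.le_mul_of_pos_left _ (by omega))
      obtain ⟨u, rfl⟩ := Multiset.le_iff_exists_add.1 hts
      have husum : u.sum = k * p ^ n := by
        have : t.sum + u.sum = (k + 1) * p ^ n := by
          simpa using hsum
        rw [htsum] at this
        have : u.sum = (k + 1) * p ^ n - p ^ n := by omega
        rw [this]
        ring_nf
        omega
      obtain ⟨P, hPcard, hPjoin, hPsum⟩ := IH hk' u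
        (fun d hd => hdvd d (by simp [hd])) husum
      refine ⟨t ::ₘ P, by simp [hPcard], by simp [hPjoin], ?_⟩
      intro x hx
      rcases Multiset.mem_cons.1 hx with rfl | hx
      · exact htsum
      · exact hPsum x hx
end

section
/- Let n be a positive integer. For each proper divisor d of n let f(d) be the smallest multiple of d that divides n and exceeds d. If m is a multiple of n with m > Σ_{d|n, d≠n} (f(d) − d), then m exhibits sharing for n. -/
private lemma join_replicate' (j : ℕ) (q n : ℕ) :
    (Multiset.replicate j (Multiset.replicate q n)).join = Multiset.replicate (j * q) n := by
  induction j with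
  | zero => simp
  | succ j ih =>
      rw [Multiset.replicate_succ, Multiset.join_cons, ih, Nat.succ_mul,
        ← Multiset.replicate_add, Nat.add_comm]

private lemma sum_split (n : ℕ) (hn : 0 < n) (s : Multiset ℕ)
    (hdvd : ∀ d ∈ s, d ∣ n) :
    s.sum = s.count n * n + ∑ d ∈ n.properDivisors, s.count d * d := by
  have h1 : s.sum = ∑ a ∈ s.toFinset, s.count a * a := by
    have := Finset.sum_multiset_map_count s (id : ℕ → ℕ)
    simpa [smul_eq_mul] using this
  have hsub : s.toFinset ⊆ n.divisors := by
    intro a ha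
    rw [Multiset.mem_toFinset] at ha
    exact Nat.mem_divisors.2 ⟨hdvd a ha, hn.ne'⟩
  have h2 : ∑ a ∈ s.toFinset, s.count a * a = ∑ a ∈ n.divisors, s.count a * a := by
    apply Finset.sum_subset hsub
    intro x _ hx
    rw [Multiset.mem_toFinset] at hx
    simp [Multiset.count_eq_zero_of_notMem hx]
  have hnn : n ∉ n.properDivisors := by
    simp [Nat.mem_properDivisors]
  rw [h1, h2, ← Nat.insert_self_properDivisors hn.ne', Finset.sum_insert hnn]

private lemma caseB (n : ℕ) (hn : 0 < n) (f : ℕ → ℕ) (m q : ℕ) (hq : m = n * q)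
    (hlt : (∑ d ∈ n.properDivisors, (f d - d)) < m)
    (s : Multiset ℕ) (hdvd : ∀ d ∈ s, d ∣ n) (k : ℕ) (hk : 0 < k)
    (hsum : s.sum = k * m)
    (hA : ∀ d ∈ n.properDivisors, s.count d * d ≤ f d - d) :
    ∃ P : Multiset (Multiset ℕ),
      Multiset.card P = k ∧ P.join = s ∧ ∀ t ∈ P, Multiset.sum t = m := by
  have hm0 : 0 < m := Nat.pos_of_ne_zero (by omega)
  have hsplit := sum_split n hn s hdvd
  have hproper : ∑ d ∈ n.properDivisors, s.count d * d ≤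
      ∑ d ∈ n.properDivisors, (f d - d) := Finset.sum_le_sum hA
  have hkm : (k - 1) * m + m = k * m := by
    cases k with
    | zero => omega
    | succ k => rw [Nat.succ_sub_one, Nat.succ_mul]
  have h2 : (k - 1) * m < s.count n * n := by omega
  have hcount : (k - 1) * q ≤ s.count n := by
    have h3 : (k - 1) * q * n < s.count n * n := by
      rw [hq] at h2
      have h4 : (k - 1) * q * n = (k - 1) * (n * q) := by ring
      omega
    exact le_of_lt (Nat.lt_of_mul_lt_mul_right h3)
  set r : Multiset ℕ := Multiset.replicate ((k - 1) * q) n with hr_def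
  have hr : r ≤ s := Multiset.le_count_iff_replicate_le.1 hcount
  have hru : s - r + r = s := tsub_add_cancel_of_le hr
  have hrsum : r.sum = (k - 1) * q * n := by
    rw [hr_def, Multiset.sum_replicate, smul_eq_mul]
  have hssum : (s - r).sum + r.sum = s.sum := by
    rw [← Multiset.sum_add, hru]
  have hqn : q * n = m := by rw [hq, Nat.mul_comm]
  have hheadsum : (s - r).sum = m := by
    have : (k - 1) * q * n = (k - 1) * m := by
      rw [Nat.mul_assoc, hqn]
    omega
  refine ⟨(s - r) ::ₘ Multiset.replicate (k - 1) (Multiset.replicate q n), ?_, ?_, ?_⟩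
  · rw [Multiset.card_cons, Multiset.card_replicate]; omega
  · rw [Multiset.join_cons, join_replicate', ← hr_def, hru]
  · intro t ht
    rw [Multiset.mem_cons] at ht
    rcases ht with rfl | ht
    · exact hheadsum
    · rw [Multiset.eq_of_mem_replicate ht, Multiset.sum_replicate, smul_eq_mul, hqn]

private lemma auxN (n : ℕ) (hn : 0 < n) (f : ℕ → ℕ)
    (hf : ∀ d, d ∣ n → d ≠ n → IsLeast {e : ℕ | d ∣ e ∧ e ∣ n ∧ d < e} (f d))
    (m q : ℕ) (hq : m = n * q)
    (hlt : (∑ d ∈ n.properDivisors, (f d - d)) < m) :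
    ∀ N : ℕ, ∀ s : Multiset ℕ, Multiset.card s ≤ N → (∀ d ∈ s, d ∣ n) →
      ∀ k : ℕ, 0 < k → s.sum = k * m →
      ∃ P : Multiset (Multiset ℕ),
        Multiset.card P = k ∧ P.join = s ∧ ∀ t ∈ P, Multiset.sum t = m := by
  intro N
  induction N with
  | zero =>
      intro s hcard hdvd k hk hsum
      have hs0 : s = 0 := Multiset.card_eq_zero.1 (Nat.le_zero.1 hcard)
      subst hs0
      have hm0 : 0 < m := Nat.pos_of_ne_zero (by omega)
      have := Nat.mul_pos hk hm0
      simp at hsum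
      omega
  | succ N ih =>
      intro s hcard hdvd k hk hsum
      by_cases hA : ∃ d ∈ n.properDivisors, f d ≤ s.count d * d
      · -- merge case
        obtain ⟨d, hdp, hAd⟩ := hA
        rw [Nat.mem_properDivisors] at hdp
        obtain ⟨⟨hddvd, hfdvd, hdlt⟩, -⟩ := hf d hdp.1 (Nat.ne_of_lt hdp.2)
        obtain ⟨a, ha⟩ := hddvd
        have hd0 : 0 < d := Nat.pos_of_dvd_of_pos hdp.1 hn
        have ha2 : 2 ≤ a := by nlinarith
        have hacount : a ≤ s.count d := by
          have : d * a ≤ s.count d * d := ha ▸ hAd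
          nlinarith
        set r : Multiset ℕ := Multiset.replicate a d with hr_def
        have hr : r ≤ s := Multiset.le_count_iff_replicate_le.1 hacount
        have hru : s - r + r = s := tsub_add_cancel_of_le hr
        have hrsum : r.sum = a * d := by
          rw [hr_def, Multiset.sum_replicate, smul_eq_mul]
        have hssum : (s - r).sum + r.sum = s.sum := by
          rw [← Multiset.sum_add, hru]
        set s' : Multiset ℕ := f d ::ₘ (s - r) with hs'_def
        have hcard' : Multiset.card s' ≤ N := by
          have hcr : Multiset.card r ≤ Multiset.card s := Multiset.card_le_card hr
          have : Multiset.card r = a := Multiset.card_replicate _ _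
          rw [hs'_def, Multiset.card_cons, Multiset.card_sub hr]
          omega
        have hdvd' : ∀ e ∈ s', e ∣ n := by
          intro e he
          rw [hs'_def, Multiset.mem_cons] at he
          rcases he with rfl | he
          · exact hfdvd
          · exact hdvd e (Multiset.mem_of_le (Multiset.sub_le_self _ _) he)
        have had : a * d = d * a := Nat.mul_comm a d
        have hsum' : s'.sum = k * m := by
          rw [hs'_def, Multiset.sum_cons]
          omega
        obtain ⟨P', hcardP', hjoinP', hsumP'⟩ := ih s' hcard' hdvd' k hk hsum'
        have hfd_mem : f d ∈ P'.join := by rw [hjoinP']; exact Multiset.mem_cons_self _ _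
        obtain ⟨t, htP', hft⟩ := Multiset.mem_join.1 hfd_mem
        set e : Multiset ℕ := t.erase (f d) with he_def
        have hte : f d ::ₘ e = t := Multiset.cons_erase hft
        set J : Multiset ℕ := (P'.erase t).join with hJ_def
        have hPcons : t ::ₘ P'.erase t = P' := Multiset.cons_erase htP'
        have hE1 : t + J = (f d) ::ₘ (s - r) := by
          rw [hJ_def, ← Multiset.join_cons, hPcons, hjoinP']
        have hE : e + J = s - r := by
          have h3 : (f d) ::ₘ (e + J) = (f d) ::ₘ (s - r) := by
            rw [← Multiset.cons_add, hte, hE1]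
          exact (Multiset.cons_inj_right _).1 h3
        refine ⟨(r + e) ::ₘ P'.erase t, ?_, ?_, ?_⟩
        · rw [Multiset.card_cons, Multiset.card_erase_of_mem htP', hcardP']
          exact Nat.succ_pred_eq_of_pos hk
        · rw [Multiset.join_cons, ← hJ_def, add_assoc, hE, add_comm]
          exact hru
        · intro u hu
          rw [Multiset.mem_cons] at hu
          rcases hu with rfl | hu
          · have htsum : t.sum = m := hsumP' t htP'
            have hfe : (f d) + e.sum = m := by rw [← Multiset.sum_cons, hte, htsum]
            rw [Multiset.sum_add, hrsum]
            omega
          · exact hsumP' u (Multiset.mem_of_le (Multiset.erase_le _ _) hu)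
      · push_neg at hA
        apply caseB n hn f m q hq hlt s hdvd k hk hsum
        intro d hdp
        have hAd := hA d hdp
        rw [Nat.mem_properDivisors] at hdp
        obtain ⟨⟨hddvd, hfdvd, hdlt⟩, -⟩ := hf d hdp.1 (Nat.ne_of_lt hdp.2)
        obtain ⟨a, ha⟩ := hddvd
        have hd0 : 0 < d := Nat.pos_of_dvd_of_pos hdp.1 hn
        have hca : s.count d < a := by nlinarith
        have h5 : (s.count d + 1) * d ≤ a * d := Nat.mul_le_mul_right d hca
        have h6 : (s.count d + 1) * d = s.count d * d + d := by ring
        have h7 : a * d = d * a := Nat.mul_comm a d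
        omega

/-- Let `n` be positive and, for every proper divisor `d` of `n`, let `f d` be the least
multiple of `d` which divides `n` and is strictly bigger than `d`.  If `m` is a multiple
of `n` with `m > ∑_{d ∣ n, d ≠ n} (f d - d)`, then `m` exhibits sharing for `n`. -/
theorem multiple_exceeding_sum_exhibits_sharing
    (n : ℕ) (hn : 0 < n) (f : ℕ → ℕ)
    (hf : ∀ d, d ∣ n → d ≠ n → IsLeast {e : ℕ | d ∣ e ∧ e ∣ n ∧ d < e} (f d))
    (m : ℕ) (hm : n ∣ m)
    (hlt : (∑ d ∈ n.properDivisors, (f d - d)) < m) :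
    ExhibitsSharing n m := by
  obtain ⟨q, hq⟩ := hm
  intro k hk s hs hsum
  exact auxN n hn f hf m q hq hlt (Multiset.card s) s le_rfl hs k hk hsum
end

section
/- Let A → B be a map of commutative rings and let ε: R → B be an augmented A-algebra over B that is an abelian group object in the category of A-algebras over B, with addition map σ: R ×_B R → R. Then the augmentation ideal I = ker(ε) satisfies I² = 0, and the map B ⋉ I → R, (b, m) ↦ s(b) + m (where s: B → R is the unit/zero section), is an isomorphism of A-algebras over B, with inverse r ↦ (ε(r), r − s(ε(r))). -/
/-- Let `ε : R → B` be an augmented `A`-algebra over `B` which is an abelian group object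
in `A`-algebras over `B`, with zero section `s : B → R` and addition `σ : R ×_B R → R`.
Then the augmentation ideal `I = ker ε` satisfies `I ^ 2 = 0`, and
`(b, m) ↦ s b + m` is an isomorphism `B ⋉ I ≅ R` of `A`-algebras over `B`
(with inverse `r ↦ (ε r, r - s (ε r))`). -/
theorem abelian_group_object_is_square_zero_extension
    {A B R : Type*} [CommRing A] [CommRing B] [CommRing R]
    [Algebra A B] [Algebra A R]
    (ε : R →ₐ[A] B) (s : B →ₐ[A] R) (hs : ε.comp s = AlgHom.id A B)
    (P : Subring (R × R))
    (hP : P = RingHom.eqLocus ((ε : R →+* B).comp (RingHom.fst R R))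
        ((ε : R →+* B).comp (RingHom.snd R R)))
    (σ : P →+* R)
    (hσε : ∀ x : P, ε (σ x) = ε (x : R × R).1)
    (hσA : ∀ (a : A) (h : ((algebraMap A R a, algebraMap A R a) : R × R) ∈ P),
        σ ⟨(algebraMap A R a, algebraMap A R a), h⟩ = algebraMap A R a)
    (hunitr : ∀ (r : R) (h : ((r, s (ε r)) : R × R) ∈ P), σ ⟨(r, s (ε r)), h⟩ = r)
    (hunitl : ∀ (r : R) (h : ((s (ε r), r) : R × R) ∈ P), σ ⟨(s (ε r), r), h⟩ = r) :
    (RingHom.ker (ε : R →+* B)) * (RingHom.ker (ε : R →+* B)) = ⊥ ∧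
    (∀ (b b' : B) (m m' : R), m ∈ RingHom.ker (ε : R →+* B) →
        m' ∈ RingHom.ker (ε : R →+* B) →
        (s b + m) * (s b' + m') = s (b * b') + (s b * m' + s b' * m)) ∧
    Function.Bijective
      (fun p : B × RingHom.ker (ε : R →+* B) => s p.1 + (p.2 : R)) ∧
    (∀ (b : B) (m : RingHom.ker (ε : R →+* B)), ε (s b + (m : R)) = b) ∧
    (∀ r : R, r - s (ε r) ∈ RingHom.ker (ε : R →+* B) ∧ s (ε r) + (r - s (ε r)) = r) := by

  -- ε ∘ s = id pointwise
  have hεs : ∀ b : B, ε (s b) = b := fun b => AlgHom.congr_fun hs b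
  -- membership in P
  have hmemP : ∀ x : R × R, ε x.1 = ε x.2 → x ∈ P := by
    intro x hx
    rw [hP]
    exact hx
  -- key: products of kernel elements vanish
  have hmul0 : ∀ m m' : R, ε m = 0 → ε m' = 0 → m * m' = 0 := by
    intro m m' hm hm'
    have h1 : ((m, 0) : R × R) ∈ P := hmemP _ (by simp [hm])
    have h2 : ((0, m') : R × R) ∈ P := hmemP _ (by simp [hm'])
    have e1 : σ ⟨(m, 0), h1⟩ = m := by
      have hs0 : s (ε m) = 0 := by rw [hm, map_zero]
      have h' : ((m, s (ε m)) : R × R) ∈ P := by rw [hs0]; exact h1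
      have key : (⟨(m, 0), h1⟩ : P) = ⟨(m, s (ε m)), h'⟩ := Subtype.ext (Prod.ext rfl hs0.symm)
      rw [key, hunitr m h']
    have e2 : σ ⟨(0, m'), h2⟩ = m' := by
      have hs0 : s (ε m') = 0 := by rw [hm', map_zero]
      have h' : ((s (ε m'), m') : R × R) ∈ P := by rw [hs0]; exact h2
      have key : (⟨(0, m'), h2⟩ : P) = ⟨(s (ε m'), m'), h'⟩ := Subtype.ext (Prod.ext hs0.symm rfl)
      rw [key, hunitl m' h']
    have : (⟨(m, 0), h1⟩ : P) * ⟨(0, m'), h2⟩ = 0 := Subtype.ext (by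
      simp [Prod.ext_iff])
    calc m * m' = σ ⟨(m, 0), h1⟩ * σ ⟨(0, m'), h2⟩ := by rw [e1, e2]
      _ = σ ((⟨(m, 0), h1⟩ : P) * ⟨(0, m'), h2⟩) := (map_mul σ _ _).symm
      _ = 0 := by rw [this, map_zero]
  refine ⟨?_, ?_, ⟨?_, ?_⟩, ?_, ?_⟩
  · rw [eq_bot_iff, Ideal.mul_le]
    intro r hr t ht
    rw [Ideal.mem_bot]
    exact hmul0 r t hr ht
  · intro b b' m m' hm hm'
    rw [map_mul]
    linear_combination hmul0 m m' hm hm' 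
  · intro p q h
    have hp : ε (p.2 : R) = 0 := p.2.2
    have hq : ε (q.2 : R) = 0 := q.2.2
    have h1 : p.1 = q.1 := by
      have := congrArg ε h
      simpa [map_add, hεs, hp, hq] using this
    have h2 : (p.2 : R) = (q.2 : R) := by
      have := h
      simp only [h1] at this
      exact add_left_cancel this
    exact Prod.ext h1 (Subtype.ext h2)
  · intro r
    refine ⟨⟨ε r, ⟨r - s (ε r), ?_⟩⟩, ?_⟩
    · show ε (r - s (ε r)) = 0
      rw [map_sub, hεs, sub_self]
    · show s (ε r) + (r - s (ε r)) = r
      ring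
  · intro b m
    have hm0 : ε (m : R) = 0 := m.2
    rw [map_add, hεs, hm0, add_zero]
  · intro r
    constructor
    · show ε (r - s (ε r)) = 0
      rw [map_sub, hεs, sub_self]
    · ring
end

section
/- Let A → B be a map of commutative rings, R an abelian group object in A-Alg/B with addition map σ: R ×_B R → R a ring homomorphism, and let I = ker(R → B). Then for any m₀, m₁ ∈ I, the product m₀·m₁ = 0. -/
/-- If `R` is an abelian group object in `A`-algebras over `B`, with addition
`σ : R ×_B R → R` a ring homomorphism, then any two elements of the augmentation ideal
`I = ker (R → B)` multiply to zero. -/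
theorem augmentation_ideal_square_zero
    {A B R : Type*} [CommRing A] [CommRing B] [CommRing R]
    [Algebra A B] [Algebra A R]
    (ε : R →ₐ[A] B)
    (P : Subring (R × R))
    (hP : P = RingHom.eqLocus ((ε : R →+* B).comp (RingHom.fst R R))
        ((ε : R →+* B).comp (RingHom.snd R R)))
    (σ : P →+* R)
    (hσ1 : ∀ (m : R) (_ : ε m = 0) (h : ((m, 0) : R × R) ∈ P), σ ⟨(m, 0), h⟩ = m)
    (hσ2 : ∀ (m : R) (_ : ε m = 0) (h : ((0, m) : R × R) ∈ P), σ ⟨(0, m), h⟩ = m) :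
    ∀ m₀ m₁ : R, ε m₀ = 0 → ε m₁ = 0 → m₀ * m₁ = 0 := by
  intro m₀ m₁ h₀ h₁
  have hmem : ∀ x : R × R, ε x.1 = ε x.2 → x ∈ P := by
    intro x hx
    rw [hP]
    exact hx
  have h1 : ((m₀, 0) : R × R) ∈ P := hmem _ (by simp [h₀])
  have h2 : ((0, m₁) : R × R) ∈ P := hmem _ (by simp [h₁])
  have hprod : (⟨(m₀, 0), h1⟩ : P) * ⟨(0, m₁), h2⟩ = 0 := by
    apply Subtype.ext
    simp [Prod.ext_iff]
  calc m₀ * m₁ = σ ⟨(m₀, 0), h1⟩ * σ ⟨(0, m₁), h2⟩ := by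
        rw [hσ1 m₀ h₀ h1, hσ2 m₁ h₁ h2]
    _ = σ (⟨(m₀, 0), h1⟩ * ⟨(0, m₁), h2⟩) := (map_mul σ _ _).symm
    _ = 0 := by rw [hprod, map_zero]
end

section
/- Let A be a commutative ring, B and C two A-algebras, and W a B ⊗_A C-module. Then there is a natural isomorphism Der_A(B ⊗_A C, W) ≅ Der_A(B, W) ⊕ Der_A(C, W). -/
open scoped TensorProduct

section Aux
set_option linter.unusedSectionVars false

variable (A B C : Type*) [CommRing A] [CommRing B] [CommRing C]
    [Algebra A B] [Algebra A C]
    (W : Type*) [AddCommGroup W] [Module (B ⊗[A] C) W]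
    [Module A W] [Module B W] [Module C W]
    (hA : ∀ (a : A) (w : W), a • w = algebraMap A (B ⊗[A] C) a • w)
    (hB : ∀ (b : B) (w : W), b • w = (b ⊗ₜ[A] (1 : C)) • w)
    (hC : ∀ (c : C) (w : W), c • w = ((1 : B) ⊗ₜ[A] c) • w)

include hB hC in
lemma hBC : ∀ (b : B) (c : C) (w : W), (b ⊗ₜ[A] c) • w = b • c • w := by
  intro b c w
  rw [hB, hC, smul_smul]
  congr 1
  rw [Algebra.TensorProduct.tmul_mul_tmul, one_mul, mul_one]

include hA hB in
lemma tower1 : IsScalarTower A B W := by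
  constructor
  intro a b w
  rw [hA, hB, hB, smul_smul]
  congr 1
  rw [← Algebra.smul_def, ← TensorProduct.smul_tmul']

include hA hC in
lemma tower2 : IsScalarTower A C W := by
  constructor
  intro a c w
  rw [hA, hC, hC, smul_smul]
  congr 1
  rw [← Algebra.smul_def, TensorProduct.tmul_smul]

include hB hC in
lemma scomm : SMulCommClass B C W := by
  constructor
  intro b c w
  rw [hB, hC, hC, hB, smul_smul, smul_smul]
  congr 1
  rw [Algebra.TensorProduct.tmul_mul_tmul, Algebra.TensorProduct.tmul_mul_tmul]
  rw [one_mul, mul_one, one_mul, mul_one]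

end Aux

section Main
set_option linter.unusedSectionVars false
set_option maxHeartbeats 1000000

variable (A B C : Type*) [CommRing A] [CommRing B] [CommRing C]
    [Algebra A B] [Algebra A C]
    (W : Type*) [AddCommGroup W] [Module (B ⊗[A] C) W]
    [Module A W] [Module B W] [Module C W]
    (hA : ∀ (a : A) (w : W), a • w = algebraMap A (B ⊗[A] C) a • w)
    (hB : ∀ (b : B) (w : W), b • w = (b ⊗ₜ[A] (1 : C)) • w)
    (hC : ∀ (c : C) (w : W), c • w = ((1 : B) ⊗ₜ[A] c) • w)

/-- restriction of a derivation to B -/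
noncomputable def resB (d : Derivation A (B ⊗[A] C) W) : Derivation A B W where
  toLinearMap := d.toLinearMap.comp (Algebra.TensorProduct.includeLeft (R := A) (S := A)).toLinearMap
  map_one_eq_zero' := by
    simp only [LinearMap.coe_comp, Function.comp_apply, AlgHom.toLinearMap_apply, map_one]
    exact d.map_one_eq_zero
  leibniz' a b := by
    have h : (a * b) ⊗ₜ[A] (1 : C) = (a ⊗ₜ[A] (1:C)) * (b ⊗ₜ[A] (1:C)) := by
      rw [Algebra.TensorProduct.tmul_mul_tmul, mul_one]
    simp only [LinearMap.coe_comp, Function.comp_apply, AlgHom.toLinearMap_apply,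
      Algebra.TensorProduct.includeLeft_apply, h, hB]
    exact d.leibniz _ _

noncomputable def resC (d : Derivation A (B ⊗[A] C) W) : Derivation A C W where
  toLinearMap := d.toLinearMap.comp (Algebra.TensorProduct.includeRight (R := A)).toLinearMap
  map_one_eq_zero' := by
    simp only [LinearMap.coe_comp, Function.comp_apply, AlgHom.toLinearMap_apply, map_one]
    exact d.map_one_eq_zero
  leibniz' a b := by
    have h : (1 : B) ⊗ₜ[A] (a * b) = ((1:B) ⊗ₜ[A] a) * ((1:B) ⊗ₜ[A] b) := by
      rw [Algebra.TensorProduct.tmul_mul_tmul, mul_one]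
    simp only [LinearMap.coe_comp, Function.comp_apply, AlgHom.toLinearMap_apply,
      Algebra.TensorProduct.includeRight_apply, h, hC]
    exact d.leibniz _ _

include hA hB hC in
noncomputable def glue (d₁ : Derivation A B W) (d₂ : Derivation A C W) :
    Derivation A (B ⊗[A] C) W := by
  haveI t1 := tower1 A B C W hA hB
  haveI t2 := tower2 A B C W hA hC
  haveI t3 := scomm A B C W hB hC
  haveI t3' := SMulCommClass.symm B C W
  have hbc := hBC A B C W hB hC
  have p1 : ∀ (b b' : B) (c : C), (fun b c => c • d₁ b + b • d₂ c) (b + b') c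
      = (fun b c => c • d₁ b + b • d₂ c) b c + (fun b c => c • d₁ b + b • d₂ c) b' c := by
    intro b b' c; simp only [map_add, smul_add, add_smul]; abel
  have p2 : ∀ (a : A) (b : B) (c : C), (fun b c => c • d₁ b + b • d₂ c) (a • b) c
      = a • (fun b c => c • d₁ b + b • d₂ c) b c := by
    intro a b c
    simp only [Derivation.map_smul, smul_comm (M := A), smul_add, smul_assoc]
  have p3 : ∀ (b : B) (c c' : C), (fun b c => c • d₁ b + b • d₂ c) b (c + c')
      = (fun b c => c • d₁ b + b • d₂ c) b c + (fun b c => c • d₁ b + b • d₂ c) b c' := by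
    intro b c c'; simp only [map_add, smul_add, add_smul]; abel
  have p4 : ∀ (a : A) (b : B) (c : C), (fun b c => c • d₁ b + b • d₂ c) b (a • c)
      = a • (fun b c => c • d₁ b + b • d₂ c) b c := by
    intro a b c
    simp only [Derivation.map_smul, smul_comm (M := A), smul_add, smul_assoc]
  set L := TensorProduct.lift (LinearMap.mk₂ A (fun b c => c • d₁ b + b • d₂ c) p1 p2 p3 p4)
    with hL
  have Ltmul : ∀ (b : B) (c : C), L (b ⊗ₜ[A] c) = c • d₁ b + b • d₂ c := by
    intro b c; rw [hL]; simp [TensorProduct.lift.tmul]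
  have key : ∀ (x y : B ⊗[A] C), L (x * y) = x • L y + y • L x := by
    have base : ∀ (b b' : B) (c c' : C),
        L ((b ⊗ₜ[A] c) * (b' ⊗ₜ[A] c')) =
          (b ⊗ₜ[A] c) • L (b' ⊗ₜ[A] c') + (b' ⊗ₜ[A] c') • L (b ⊗ₜ[A] c) := by
      intro b b' c c'
      rw [Algebra.TensorProduct.tmul_mul_tmul, Ltmul, Ltmul, Ltmul]
      simp only [d₁.leibniz, d₂.leibniz, smul_add]
      simp only [hB, hC, smul_smul, Algebra.TensorProduct.tmul_mul_tmul, one_mul, mul_one]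
      simp only [mul_comm, mul_left_comm]
      abel
    intro x y
    induction x using TensorProduct.induction_on with
    | zero => simp
    | tmul b c =>
      induction y using TensorProduct.induction_on with
      | zero => simp
      | tmul b' c' => exact base b b' c c'
      | add y₁ y₂ h1 h2 => rw [mul_add, map_add, h1, h2, map_add, smul_add, add_smul]; abel
    | add x₁ x₂ h1 h2 => rw [add_mul, map_add, h1, h2, map_add, smul_add, add_smul]; abel
  exact
    { toLinearMap := L
      map_one_eq_zero' := by
        rw [Algebra.TensorProduct.one_def, Ltmul]
        simp [d₁.map_one_eq_zero, d₂.map_one_eq_zero]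
      leibniz' := key }

include hA hB hC in
lemma glue_tmul (d₁ : Derivation A B W) (d₂ : Derivation A C W) (b : B) (c : C) :
    glue A B C W hA hB hC d₁ d₂ (b ⊗ₜ[A] c) = c • d₁ b + b • d₂ c := by
  simp [glue, TensorProduct.lift.tmul]

end Main


/-- For `A`-algebras `B`, `C` and a `B ⊗[A] C`-module `W`, there is a natural
isomorphism `Der_A(B ⊗[A] C, W) ≅ Der_A(B, W) ⊕ Der_A(C, W)` given by restriction
along the two canonical inclusions. -/
theorem derivations_of_tensor_product
    (A B C : Type*) [CommRing A] [CommRing B] [CommRing C]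
    [Algebra A B] [Algebra A C]
    (W : Type*) [AddCommGroup W] [Module (B ⊗[A] C) W]
    [Module A W] [Module B W] [Module C W]
    (hA : ∀ (a : A) (w : W), a • w = algebraMap A (B ⊗[A] C) a • w)
    (hB : ∀ (b : B) (w : W), b • w = (b ⊗ₜ[A] (1 : C)) • w)
    (hC : ∀ (c : C) (w : W), c • w = ((1 : B) ⊗ₜ[A] c) • w) :
    ∃ e : Derivation A (B ⊗[A] C) W ≃+ Derivation A B W × Derivation A C W,
      ∀ d : Derivation A (B ⊗[A] C) W,
        (∀ b : B, (e d).1 b = d (b ⊗ₜ[A] (1 : C))) ∧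
        (∀ c : C, (e d).2 c = d ((1 : B) ⊗ₜ[A] c)) := by

  refine ⟨⟨⟨fun d => (resB A B C W hB d, resC A B C W hC d),
      fun p => glue A B C W hA hB hC p.1 p.2, ?_, ?_⟩, ?_⟩, ?_⟩
  · -- left inverse
    intro d
    ext x
    induction x using TensorProduct.induction_on with
    | zero => simp
    | tmul b c =>
      rw [glue_tmul]
      have hx : b ⊗ₜ[A] c = (b ⊗ₜ[A] (1:C)) * ((1:B) ⊗ₜ[A] c) := by
        rw [Algebra.TensorProduct.tmul_mul_tmul, mul_one, one_mul]
      rw [hx, d.leibniz, ← hB, ← hC]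
      exact add_comm _ _
    | add x y hx hy => rw [map_add, map_add, hx, hy]
  · -- right inverse
    rintro ⟨d₁, d₂⟩
    ext b
    · show glue A B C W hA hB hC d₁ d₂ (b ⊗ₜ[A] (1:C)) = d₁ b
      rw [glue_tmul, d₂.map_one_eq_zero, smul_zero, one_smul, add_zero]
    · show glue A B C W hA hB hC d₁ d₂ ((1:B) ⊗ₜ[A] b) = d₂ b
      rw [glue_tmul, d₁.map_one_eq_zero, smul_zero, one_smul, zero_add]
  · intro d d'
    refine Prod.ext ?_ ?_ <;> ext x <;> rfl
  · intro d
    exact ⟨fun b => rfl, fun c => rfl⟩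
end

section
/- Let A be a commutative ring, B and C two A-algebras. Then Ω_{(B ⊗_A C)/A} ≅ (Ω_{B/A} ⊗_B (B ⊗_A C)) ⊕ (Ω_{C/A} ⊗_C (B ⊗_A C)) as B ⊗_A C-modules. -/
/-!
Write `T = B ⊗[A] C`. The first fundamental sequence `T ⊗[B] Ω[B⁄A] → Ω[T⁄A] → Ω[T⁄B] → 0`
is exact, and since `T` is the pushout of `C` along `A → B`, the composite
`T ⊗[C] Ω[C⁄A] → Ω[T⁄A] → Ω[T⁄B]` is the base change isomorphism; symmetrically
`T ⊗[B] Ω[B⁄A] → Ω[T⁄A] → Ω[T⁄C]` is an isomorphism. Hence the sequence splits and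
`Ω[T⁄A] ≅ T ⊗[B] Ω[B⁄A] × T ⊗[C] Ω[C⁄A]`.
-/

open scoped TensorProduct

attribute [local instance] Algebra.TensorProduct.rightAlgebra

open KaehlerDifferential

theorem Function.Exact.bijective_coprod {R M₁ M₂ N P₁ P₂ : Type*} [Semiring R]
    [AddCommGroup M₁] [AddCommGroup M₂] [AddCommGroup N] [AddCommGroup P₁] [AddCommGroup P₂]
    [Module R M₁] [Module R M₂] [Module R N] [Module R P₁] [Module R P₂]
    {f₁ : M₁ →ₗ[R] N} {g₁ : N →ₗ[R] P₁} {f₂ : M₂ →ₗ[R] N} {g₂ : N →ₗ[R] P₂}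
    (h : Function.Exact f₁ g₁) (h₁ : Function.Injective (g₂ ∘ₗ f₁))
    (h₂ : Function.Bijective (g₁ ∘ₗ f₂)) :
    Function.Bijective (f₁.coprod f₂) := by
  have hg₁f₁ : ∀ x, g₁ (f₁ x) = 0 := h.apply_apply_eq_zero
  refine ⟨(injective_iff_map_eq_zero _).2 fun ⟨x, y⟩ hxy ↦ ?_, fun n ↦ ?_⟩
  · rw [LinearMap.coprod_apply] at hxy
    have hy : y = 0 := h₂.1 <| by simpa [hg₁f₁] using congr_arg g₁ hxy
    subst hy
    have hx : x = 0 := h₁ <| by simpa using congr_arg g₂ hxy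
    simp [hx]
  · obtain ⟨y, hy⟩ := h₂.2 (g₁ n)
    obtain ⟨x, hx⟩ := (h (n - f₂ y)).1 (by simpa [sub_eq_zero] using hy.symm)
    exact ⟨(x, y), by simp [hx]⟩

theorem KaehlerDifferential.map_comp_mapBaseChange (R S A B : Type*) [CommRing R] [CommRing S]
    [CommRing A] [CommRing B] [Algebra R S] [Algebra R A] [Algebra R B] [Algebra A B]
    [Algebra S B] [IsScalarTower R A B] [IsScalarTower R S B] [Algebra.IsPushout R S A B] :
    map R S B B ∘ₗ mapBaseChange R A B = (tensorKaehlerEquiv R S A B).toLinearMap := by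
  ext a
  simp

/-- Kähler differentials of a tensor product: as `B ⊗[A] C`-modules,
`Ω_{(B ⊗_A C)/A} ≅ (Ω_{B/A} ⊗_B (B ⊗_A C)) ⊕ (Ω_{C/A} ⊗_C (B ⊗_A C))`. -/
theorem kaehler_of_tensor_product
    (A B C : Type*) [CommRing A] [CommRing B] [CommRing C]
    [Algebra A B] [Algebra A C] :
    Nonempty (KaehlerDifferential A (B ⊗[A] C) ≃ₗ[B ⊗[A] C]
      ((B ⊗[A] C) ⊗[B] KaehlerDifferential A B) ×
      ((B ⊗[A] C) ⊗[C] KaehlerDifferential A C)) := by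
  have hB := (tensorKaehlerEquiv A C B (B ⊗[A] C)).injective
  have hC := (tensorKaehlerEquiv A B C (B ⊗[A] C)).bijective
  rw [← LinearEquiv.coe_coe, ← map_comp_mapBaseChange] at hB hC
  exact ⟨(LinearEquiv.ofBijective _
    ((exact_mapBaseChange_map A B (B ⊗[A] C)).bijective_coprod hB hC)).symm⟩
end
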